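/- arXiv:math/0508238 — 7 statements merged into one kernel-verified Lean document; each statement's English description precedes it below -/
import Mathlib

section
/- Let G be a topological group whose topology is the weak topology determined by an increasing filtration K_1 ⊆ K_2 ⊆ ⋯ by compact subsets with ⋃ K_k = G. Let H be a closed normal subgroup of G with quotient map q : G → G/H, and let M_k = q(K_k) with the quotient topology from q restricted to K_k. Then for each k the inclusion M_k → M_{k+1} is a topological embedding, and the weak topology on G/H determined by the filtration M_1 ⊆ M_2 ⊆ ⋯ coincides with the quotient topology on G/H. -/
/-!
Since `H` is closed, `G ⧸ H` is Hausdorff, so on each compact image `M k` the quotient topology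
from `K k` is the subspace topology; this makes the inclusions embeddings. Each `M k` is then
closed in `G ⧸ H`. If `C` has closed traces on all `M k`, each `C ∩ M k` is closed in `G ⧸ H`, and
`q ⁻¹' C ∩ K k = q ⁻¹' (C ∩ M k) ∩ K k` is closed by the weak topology of `G`; hence
`q ⁻¹' C` and `C` are closed.
-/

open TopologicalSpace Topology

theorem Topology.IsQuotientMap.isClosed_iff_forall_isClosed_preimage_val {X Y ι : Type*}
    [TopologicalSpace X] [TopologicalSpace Y] {π : X → Y} (hπ : IsQuotientMap π)
    (K : ι → Set X) (hweak : ∀ C : Set X, IsClosed C ↔ ∀ k, IsClosed (C ∩ K k))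
    (S : ι → Set Y) (hS : ∀ k, IsClosed (S k)) (hKS : ∀ k, Set.MapsTo π (K k) (S k))
    (C : Set Y) : IsClosed C ↔ ∀ k, IsClosed ((↑) ⁻¹' C : Set (S k)) := by
  refine ⟨fun hC k => hC.preimage continuous_subtype_val, fun h => ?_⟩
  refine hπ.isClosed_preimage.mp ((hweak _).mpr fun k => ?_)
  have hCS : IsClosed (C ∩ S k) := by
    simpa [Set.inter_comm] using (hS k).isClosedMap_subtype_val _ (h k)
  have hpre : π ⁻¹' (C ∩ S k) ∩ K k = π ⁻¹' C ∩ K k := by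
    ext x
    exact ⟨fun ⟨⟨hx, _⟩, hxK⟩ => ⟨hx, hxK⟩, fun ⟨hx, hxK⟩ => ⟨⟨hx, hKS k hxK⟩, hxK⟩⟩
  rw [← hpre]
  exact (hweak _).mp (hCS.preimage hπ.continuous) k

theorem IsCompact.coinduced_eq_instTopologicalSpaceSubtype {X Y : Type*} [TopologicalSpace X]
    [TopologicalSpace Y] [T2Space Y] {f : X → Y} (hf : Continuous f) {K : Set X}
    (hK : IsCompact K) {S : Set Y} (hS : S = f '' K) (g : K → S) (hg : ∀ x, (g x : Y) = f x) :
    coinduced g inferInstance = instTopologicalSpaceSubtype := by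
  have : CompactSpace K := isCompact_iff_compactSpace.mp hK
  have hgc : Continuous g := continuous_induced_rng.mpr <| by
    simpa only [Function.comp_def, hg] using hf.comp continuous_subtype_val
  have hgs : Function.Surjective g := by
    rintro ⟨y, hy⟩
    obtain ⟨x, hx, rfl⟩ := hS ▸ hy
    exact ⟨⟨x, hx⟩, Subtype.ext (hg _)⟩
  exact ((hgc.isClosedMap).isQuotientMap hgc hgs).eq_coinduced.symm

/-- Let `G` be a topological group whose topology is the weak topology of an increasing
filtration by compact subsets `K k`, let `H` be a closed normal subgroup, `q : G → G/H`
the quotient map, and `M k = q '' K k` with the quotient topology from `q` restricted to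
`K k`.  Then each inclusion `M k → M (k+1)` is a topological embedding, and the weak
topology on `G/H` determined by the `M k` coincides with the quotient topology. -/
theorem quotient_weak_topology_of_compact_filtration
    {G : Type*} [Group G] [TopologicalSpace G] [IsTopologicalGroup G]
    (K : ℕ → Set G) (hKcpt : ∀ k, IsCompact (K k)) (hmono : Monotone K)
    (hweak : ∀ C : Set G, IsClosed C ↔ ∀ k, IsClosed (C ∩ K k))
    (H : Subgroup G) [H.Normal] (hH : IsClosed (H : Set G))
    (q : G → G ⧸ H) (hq : q = QuotientGroup.mk)
    (M : ℕ → Set (G ⧸ H)) (hM : ∀ k, M k = q '' K k)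
    -- `t k` is the quotient topology on `M k` induced by `q` restricted to `K k`:
    (t : ∀ k, TopologicalSpace (M k))
    (ht : ∀ k, t k = coinduced (fun x : K k => (⟨q x.1, (hM k) ▸ ⟨x.1, x.2, rfl⟩⟩ : M k))
      inferInstance) :
    (∀ k, @Topology.IsEmbedding (M k) (M (k + 1)) (t k) (t (k + 1))
        (Set.inclusion (by rw [hM k, hM (k + 1)]; exact Set.image_mono (hmono (Nat.le_succ k))))) ∧
    (∀ C : Set (G ⧸ H), IsClosed C ↔ ∀ k, @IsClosed _ (t k) (Subtype.val ⁻¹' C)) := by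
  have : IsClosed (H : Set G) := hH
  subst hq
  have hqc : Continuous (QuotientGroup.mk : G → G ⧸ H) := continuous_quot_mk
  obtain rfl : t = fun _ => instTopologicalSpaceSubtype := funext fun k =>
    (ht k).trans ((hKcpt k).coinduced_eq_instTopologicalSpaceSubtype hqc (hM k) _ fun _ => rfl)
  refine ⟨fun k => IsEmbedding.inclusion _, fun C =>
    (QuotientGroup.isQuotientMap_mk H).isClosed_iff_forall_isClosed_preimage_val K hweak M
    (fun k => (hM k ▸ (hKcpt k).image hqc).isClosed)
    (fun k => hM k ▸ Set.mapsTo_image _ _) C⟩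
end

section
/- Let G₁, G₂ be abelian topological groups, let H₁ ⊆ G₁, H₂ ⊆ G₂ be closed subgroups, and let φ : G₁ → G₂ be a continuous homomorphism with φ(H₁) ⊆ H₂. Suppose the induced map φ̄ : G₁/H₁ → G₂/H₂ is injective. If moreover φ and the restriction φ|_{H₁} : H₁ → H₂ are topological embeddings onto closed subgroups, and the filtration hypotheses hold (G₁/H₁ carries the weak topology of a filtration by compact sets C_k with φ̄(C_k) closed in the corresponding filtration of G₂/H₂ and φ̄⁻¹ of the k-th filtered piece of G₂/H₂ contained in C_k), then φ̄ is a closed topological embedding. -/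
/-! Since `φ̄` is continuous and injective, it suffices that it is a closed map. For closed
`S ⊆ G₁/H₁`, the trace `φ̄(S) ∩ D k` is the image of `S ∩ φ̄⁻¹(D k)`, a closed subset of the
compact set `C k`; so it is compact, hence closed in the Hausdorff quotient `G₂/H₂`, and the weak
topology of the filtration `D k` makes `φ̄(S)` closed. -/

theorem IsClosedMap.of_isCompact_preimage_of_coherent {X Y ι : Type*} [TopologicalSpace X]
    [TopologicalSpace Y] [T2Space Y] {f : X → Y} (hf : Continuous f) {D : ι → Set Y}
    (hcoh : ∀ S : Set Y, (∀ k, IsClosed (S ∩ D k)) → IsClosed S)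
    (hpre : ∀ k, IsCompact (f ⁻¹' D k)) : IsClosedMap f := fun S hS =>
  hcoh _ fun k => by
    rw [← Set.image_inter_preimage]
    exact ((hpre k).inter_left hS |>.image hf).isClosed

theorem QuotientAddGroup.continuous_map {G₁ G₂ : Type*} [AddGroup G₁] [TopologicalSpace G₁]
    [AddGroup G₂] [TopologicalSpace G₂] (H₁ : AddSubgroup G₁) (H₂ : AddSubgroup G₂)
    [H₁.Normal] [H₂.Normal] {φ : G₁ →+ G₂} (hφc : Continuous φ) (hφH : H₁ ≤ H₂.comap φ) :
    Continuous (QuotientAddGroup.map H₁ H₂ φ hφH) :=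
  (QuotientAddGroup.isQuotientMap_mk H₁).continuous_iff.mpr <|
    QuotientAddGroup.continuous_mk.comp hφc

theorem induced_quotient_map_closedEmbedding_general
    {G₁ G₂ : Type*} [AddCommGroup G₁] [TopologicalSpace G₁] [IsTopologicalAddGroup G₁]
    [AddCommGroup G₂] [TopologicalSpace G₂] [IsTopologicalAddGroup G₂]
    (H₁ : AddSubgroup G₁) (H₂ : AddSubgroup G₂)
    (hH₂ : IsClosed (H₂ : Set G₂))
    (φ : G₁ →+ G₂) (hφc : Continuous φ) (hφH : H₁ ≤ H₂.comap φ)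
    (φbar : G₁ ⧸ H₁ →+ G₂ ⧸ H₂) (hφbar : φbar = QuotientAddGroup.map H₁ H₂ φ hφH)
    (hinj : Function.Injective ⇑φbar)
    (Cf : ℕ → Set (G₁ ⧸ H₁)) (Df : ℕ → Set (G₂ ⧸ H₂))
    (hCcpt : ∀ k, IsCompact (Cf k)) (hDcpt : ∀ k, IsCompact (Df k))
    (hDweak : ∀ S : Set (G₂ ⧸ H₂), IsClosed S ↔ ∀ k, IsClosed (S ∩ Df k))
    (hDC : ∀ k, φbar ⁻¹' Df k ⊆ Cf k) :
    Topology.IsClosedEmbedding ⇑φbar := by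
  -- as a local instance, this makes `G₂ ⧸ H₂` Hausdorff
  have : IsClosed (H₂ : Set G₂) := hH₂
  have hcont : Continuous φbar := hφbar ▸ QuotientAddGroup.continuous_map H₁ H₂ hφc hφH
  refine .of_continuous_injective_isClosedMap hcont hinj ?_
  exact .of_isCompact_preimage_of_coherent hcont (fun S => (hDweak S).mpr) fun k =>
    (hCcpt k).of_isClosed_subset ((hDcpt k).isClosed.preimage hcont) (hDC k)

/-- Let `φ : G₁ → G₂` be a continuous homomorphism of abelian topological groups carrying a
closed subgroup `H₁` into a closed subgroup `H₂`, inducing an injective map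
`φ̄ : G₁/H₁ → G₂/H₂`.  If `φ` and `φ|_{H₁}` are closed embeddings and the quotients carry
weak topologies of compact filtrations `C k`, `D k` with `φ̄ '' C k ⊆ D k` and
`φ̄ ⁻¹ (D k) ⊆ C k`, then `φ̄` is a closed topological embedding. -/
theorem induced_quotient_map_closedEmbedding
    {G₁ G₂ : Type*} [AddCommGroup G₁] [TopologicalSpace G₁] [IsTopologicalAddGroup G₁]
    [AddCommGroup G₂] [TopologicalSpace G₂] [IsTopologicalAddGroup G₂]
    (H₁ : AddSubgroup G₁) (H₂ : AddSubgroup G₂)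
    (hH₁ : IsClosed (H₁ : Set G₁)) (hH₂ : IsClosed (H₂ : Set G₂))
    (φ : G₁ →+ G₂) (hφc : Continuous φ) (hφH : H₁ ≤ H₂.comap φ)
    (φbar : G₁ ⧸ H₁ →+ G₂ ⧸ H₂) (hφbar : φbar = QuotientAddGroup.map H₁ H₂ φ hφH)
    (hinj : Function.Injective ⇑φbar)
    (hφemb : Topology.IsClosedEmbedding ⇑φ)
    (hφHemb : Topology.IsClosedEmbedding fun x : H₁ => (⟨φ x, hφH x.2⟩ : H₂))
    (Cf : ℕ → Set (G₁ ⧸ H₁)) (Df : ℕ → Set (G₂ ⧸ H₂))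
    (hCcpt : ∀ k, IsCompact (Cf k)) (hDcpt : ∀ k, IsCompact (Df k))
    (hCmono : Monotone Cf) (hDmono : Monotone Df)
    (hCcover : ⋃ k, Cf k = Set.univ) (hDcover : ⋃ k, Df k = Set.univ)
    (hCweak : ∀ S : Set (G₁ ⧸ H₁), IsClosed S ↔ ∀ k, IsClosed (S ∩ Cf k))
    (hDweak : ∀ S : Set (G₂ ⧸ H₂), IsClosed S ↔ ∀ k, IsClosed (S ∩ Df k))
    (hCD : ∀ k, φbar '' Cf k ⊆ Df k) (hDC : ∀ k, φbar ⁻¹' Df k ⊆ Cf k) :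
    Topology.IsClosedEmbedding ⇑φbar :=
  induced_quotient_map_closedEmbedding_general H₁ H₂ hH₂ φ hφc hφH φbar hφbar hinj Cf Df hCcpt hDcpt
    hDweak hDC
end

section
/- Let Z₀(A) denote the free abelian group on a compact Hausdorff space A, topologized as the colimit of the images of SP^k(A) × SP^k(A) under (a,b) ↦ a − b. If A is a closed subspace of a compact Hausdorff space X, then Z₀(A) is a closed subgroup of Z₀(X). -/
/-!
A configuration `(p, q)` whose cycle `c = Σ [pᵢ] - Σ [qᵢ]` has a point `x₀ ∉ A` in its support
can be separated: take an open `U ∋ x₀` missing `A` and a neighbourhood `V` of the other points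
of the configuration, disjoint from `U`. The number of points of `p` (resp. `q`) lying in `U` is
locally constant near `p` (resp. `q`), so the degree of the cycle on `U` stays `c x₀ ≠ 0` nearby,
whereas every cycle supported on `A` has degree `0` on `U`. Hence the configurations whose cycle
is not supported on `A` form an open set at every level of the filtration.
-/

open scoped BigOperators

/-- The group of zero-cycles on `X`, modeled by finitely supported functions `X →₀ ℤ`,
with the weak (colimit) topology of the filtration by the images of
`SP^n(X) × SP^n(X) → Z₀(X)`, `(a, b) ↦ a - b`; a finite configuration of `n` points is
modeled by a tuple `Fin n → X`, and its image is the corresponding sum of point cycles. -/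
noncomputable def cycleTopology (X : Type*) [TopologicalSpace X] : TopologicalSpace (X →₀ ℤ) :=
  ⨆ n : ℕ, TopologicalSpace.coinduced
    (fun p : (Fin n → X) × (Fin n → X) =>
      (∑ i, Finsupp.single (p.1 i) 1) - ∑ i, Finsupp.single (p.2 i) (1 : ℤ))
    inferInstance

open Filter Topology

namespace ZeroCycles

variable {X : Type*}

noncomputable def configCycle {n : ℕ} (p : Fin n → X) : X →₀ ℤ :=
  ∑ i, Finsupp.single (p i) 1

noncomputable def degOn (U : Set X) : (X →₀ ℤ) →+ ℤ :=
  open Classical in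
  Finsupp.liftAddHom fun x => if x ∈ U then AddMonoidHom.id ℤ else 0

theorem isClosed_cycleTopology_iff [TopologicalSpace X] {S : Set (X →₀ ℤ)} :
    IsClosed[cycleTopology X] S ↔
      ∀ n : ℕ, IsClosed {pq : (Fin n → X) × (Fin n → X) |
        configCycle pq.1 - configCycle pq.2 ∈ S} :=
  isClosed_iSup_iff.trans <| forall_congr' fun _ => isClosed_coinduced

open Classical in
theorem degOn_apply (U : Set X) (c : X →₀ ℤ) :
    degOn U c = ∑ x ∈ c.support, if x ∈ U then c x else 0 := by
  rw [degOn, Finsupp.liftAddHom_apply, Finsupp.sum]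
  refine Finset.sum_congr rfl fun x _ => ?_
  split_ifs <;> rfl

theorem degOn_eq_zero_of_disjoint {U : Set X} {c : X →₀ ℤ}
    (h : Disjoint (c.support : Set X) U) : degOn U c = 0 := by
  rw [degOn_apply]
  exact Finset.sum_eq_zero fun x hx => if_neg (Set.disjoint_left.mp h hx)

theorem degOn_eq_apply_of_support_inter_subset {U : Set X} {c : X →₀ ℤ} {x₀ : X}
    (hx₀ : x₀ ∈ U) (h : ∀ x ∈ c.support, x ∈ U → x = x₀) : degOn U c = c x₀ := by
  rw [degOn_apply, Finset.sum_eq_single x₀ (fun x hx hne => if_neg fun hxU => hne (h x hx hxU))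
    (fun hx₀c => by simp [Finsupp.notMem_support_iff.mp hx₀c]), if_pos hx₀]

theorem support_configCycle_subset {n : ℕ} (p : Fin n → X) :
    ((configCycle p).support : Set X) ⊆ Set.range p := by
  classical
  intro x hx
  obtain ⟨i, -, hi⟩ := Finset.mem_biUnion.mp (Finsupp.support_finsetSum hx)
  exact ⟨i, (Finset.mem_singleton.mp (Finsupp.support_single_subset hi)).symm⟩

open Classical in
theorem degOn_configCycle (U : Set X) {n : ℕ} (p : Fin n → X) :
    degOn U (configCycle p) = (Finset.univ.filter fun i => p i ∈ U).card := by
  rw [configCycle, map_sum, ← Finset.sum_boole]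
  refine Finset.sum_congr rfl fun i _ => ?_
  rw [degOn, Finsupp.liftAddHom_apply_single]
  split_ifs <;> rfl

theorem eventually_degOn_configCycle_eq [TopologicalSpace X] {U V : Set X} (hU : IsOpen U)
    (hV : IsOpen V) (hUV : Disjoint U V) {n : ℕ} {p : Fin n → X} (hp : ∀ i, p i ∈ U ∪ V) :
    ∀ᶠ p' in 𝓝 p, degOn U (configCycle p') = degOn U (configCycle p) := by
  classical
  have hmem : ∀ᶠ p' in 𝓝 p, ∀ i, (p' i ∈ U ↔ p i ∈ U) := by
    refine eventually_all.2 fun i => ?_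
    have hcont := (continuous_apply i).continuousAt (x := p)
    rcases hp i with hpU | hpV
    · filter_upwards [hcont.eventually (hU.mem_nhds hpU)] with p' hp'
      exact iff_of_true hp' hpU
    · filter_upwards [hcont.eventually (hV.mem_nhds hpV)] with p' hp'
      exact iff_of_false (Set.disjoint_right.mp hUV hp') (Set.disjoint_right.mp hUV hpV)
  filter_upwards [hmem] with p' hp'
  simp only [degOn_configCycle, hp']

theorem isOpen_setOf_not_support_configCycle_sub_subset [TopologicalSpace X] [T2Space X]
    {A : Set X} (hA : IsClosed A) (n : ℕ) :
    IsOpen {pq : (Fin n → X) × (Fin n → X) |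
      ¬ ((configCycle pq.1 - configCycle pq.2).support : Set X) ⊆ A} := by
  classical
  refine isOpen_iff_eventually.2 fun ⟨p, q⟩ hpq => ?_
  obtain ⟨x₀, hx₀c, hx₀A⟩ := Set.not_subset.mp hpq
  set F : Set X := Set.range p ∪ Set.range q
  have hcF : ((configCycle p - configCycle q).support : Set X) ⊆ F := fun x hx =>
    (Finset.mem_union.mp (Finsupp.support_sub hx)).imp
      (fun h => support_configCycle_subset p h) (fun h => support_configCycle_subset q h)
  obtain ⟨U, V, hU, hV, hx₀U, hFV, hUV⟩ : SeparatedNhds {x₀} (F \ {x₀}) :=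
    .of_isCompact_isCompact isCompact_singleton
      (((Set.finite_range p).union (Set.finite_range q)).subset Set.sdiff_subset).isCompact
      Set.disjoint_sdiff_right
  set U' := U ∩ Aᶜ
  have hU' : IsOpen U' := hU.inter hA.isOpen_compl
  have hx₀U' : x₀ ∈ U' := ⟨hx₀U rfl, hx₀A⟩
  have hU'V : Disjoint U' V := hUV.mono_left Set.inter_subset_left
  have hcover : ∀ x ∈ F, x ∈ U' ∪ V := fun x hx => by
    by_cases h : x = x₀
    · exact Or.inl (h ▸ hx₀U')
    · exact Or.inr (hFV ⟨hx, h⟩)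
  have hdeg : degOn U' (configCycle p - configCycle q) ≠ 0 := by
    rw [degOn_eq_apply_of_support_inter_subset hx₀U' fun x hx hxU =>
      by_contra fun h => Set.disjoint_left.mp hU'V hxU (hFV ⟨hcF hx, h⟩)]
    exact Finsupp.mem_support_iff.mp hx₀c
  filter_upwards [(eventually_degOn_configCycle_eq hU' hV hU'V
      fun i => hcover _ (.inl ⟨i, rfl⟩)).prod_nhds
    (eventually_degOn_configCycle_eq hU' hV hU'V fun i => hcover _ (.inr ⟨i, rfl⟩))] with ⟨p', q'⟩ ⟨hp', hq'⟩ hsupp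
  refine hdeg ?_
  rw [map_sub, ← hp', ← hq', ← map_sub]
  exact degOn_eq_zero_of_disjoint <| Set.disjoint_left.mpr fun x hx hxU => hxU.2 (hsupp hx)

end ZeroCycles

open ZeroCycles in
theorem zeroCycles_of_closed_subspace_isClosed_general
    {X : Type*} [TopologicalSpace X] [T2Space X]
    (A : Set X) (hA : IsClosed A) :
    @IsClosed _ (cycleTopology X) {c : X →₀ ℤ | (c.support : Set X) ⊆ A} :=
  isClosed_cycleTopology_iff.2 fun n =>
    isOpen_compl_iff.1 (isOpen_setOf_not_support_configCycle_sub_subset hA n)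

/-- If `A` is a closed subspace of a compact Hausdorff space `X`, then the group `Z₀(A)`
of zero-cycles supported on `A` is a closed subgroup of the topological group `Z₀(X)` of
zero-cycles on `X` (with the weak topology of the canonical filtration). -/
theorem zeroCycles_of_closed_subspace_isClosed
    {X : Type*} [TopologicalSpace X] [CompactSpace X] [T2Space X]
    (A : Set X) (hA : IsClosed A) :
    @IsClosed _ (cycleTopology X) {c : X →₀ ℤ | (c.support : Set X) ⊆ A} :=
  zeroCycles_of_closed_subspace_isClosed_general A hA
end

section
/- Let X be a compact Hausdorff space with a continuous involution σ : X → X (conjugation). Let Z₀(X)_ℝ be the subgroup of the topological group Z₀(X) of zero-cycles fixed by the induced involution, and let Z₀(X)^av = {c + σ(c) : c ∈ Z₀(X)}. Then Z₀(X)_ℝ and Z₀(X)^av are closed subgroups of Z₀(X). -/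
open scoped BigOperators

/-!
Closedness in the colimit topology is tested on each `X^n × X^n`. There the fixed cycles pull
back to the locus where two tuples agree up to a permutation of their entries, a finite union of
closed sets. For the averaged cycles, if `c = A - B` with `A`, `B` effective of degree `n` is of
the form `a + σ a`, then `c = d + σ d` where `d` is half of `c` on fixed points and equals `c` on
one point of each free orbit; then `d ≤ A` and `deg d = 0`, so `A - d` is again effective of
degree `n`. Hence the preimage of the averaged cycles is the projection of a closed subset of
`X^n × X^n × X^n` along the last, compact, factor.
-/

namespace Finsupp

variable {X : Type*} {σ : X → X}

theorem mapDomain_apply_of_involutive (hσ : Function.Involutive σ) (a : X →₀ ℤ) (x : X) :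
    mapDomain σ a x = a (σ x) := by
  conv_lhs => rw [← hσ x]
  exact mapDomain_apply hσ.injective a (σ x)

theorem add_mapDomain_apply_of_involutive (hσ : Function.Involutive σ) (a : X →₀ ℤ)
    (x : X) : (a + mapDomain σ a) x = a x + a (σ x) := by
  rw [add_apply, mapDomain_apply_of_involutive hσ]

theorem exists_add_mapDomain_eq_of_even (hσ : Function.Involutive σ) {c : X →₀ ℤ}
    (hc : ∀ x, c (σ x) = c x) (heven : ∀ x, σ x = x → Even (c x)) :
    ∃ d : X →₀ ℤ, d + mapDomain σ d = c ∧ ∀ x, d x ∈ Set.uIcc 0 (c x) := by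
  classical
  let _ : LinearOrder X := linearOrderOfSTO WellOrderingRel
  let d : X →₀ ℤ := onFinset c.support
    (fun x => if x < σ x then c x else if σ x = x then c x / 2 else 0)
    (fun x hx => mem_support_iff.2 fun hcx => hx (by simp [hcx]))
  refine ⟨d, ext fun x => ?_, fun x => ?_⟩
  · rw [add_mapDomain_apply_of_involutive hσ]
    simp only [d, onFinset_apply, hσ x]
    rcases lt_trichotomy x (σ x) with h | h | h
    · simp [h, h.ne, not_lt.2 h.le]
    · grind
    · simp [h, h.ne, not_lt.2 h.le, hc x]
  · simp only [d, onFinset_apply, Set.mem_uIcc]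
    split_ifs <;> omega

end Finsupp

theorem List.exists_perm_comp_eq_of_perm_ofFn {α : Type*} {n : ℕ} {u v : Fin n → α}
    (h : (List.ofFn u).Perm (List.ofFn v)) : ∃ π : Equiv.Perm (Fin n), u ∘ π = v := by
  classical
  let _ : LinearOrder α := linearOrderOfSTO WellOrderingRel
  have hsort : u ∘ Tuple.sort u = v ∘ Tuple.sort v := List.ofFn_injective <|
    (((Tuple.sort u).ofFn_comp_perm u).trans
      (h.trans ((Tuple.sort v).ofFn_comp_perm v).symm)).eq_of_pairwise'
      (Tuple.monotone_sort u).sortedLE_ofFn.pairwise (Tuple.monotone_sort v).sortedLE_ofFn.pairwise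
  refine ⟨(Tuple.sort v).symm.trans (Tuple.sort u), funext fun i => ?_⟩
  simpa using congrFun hsort ((Tuple.sort v).symm i)

namespace ZeroCycle

open Finsupp Topology

variable {X : Type*}

noncomputable def ofTuple {n : ℕ} (u : Fin n → X) : X →₀ ℤ := ∑ i, single (u i) 1

theorem ofTuple_apply [DecidableEq X] {n : ℕ} (u : Fin n → X) (x : X) :
    ofTuple u x = (List.ofFn u).count x := by
  induction n with
  | zero => simp [ofTuple]
  | succ n ih =>
    rw [ofTuple, Fin.sum_univ_succ, Finsupp.add_apply, ← ofTuple, ih, List.ofFn_succ,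
      List.count_cons, single_apply]
    by_cases h : u 0 = x <;> simp [h, add_comm]

@[simp]
theorem degree_ofTuple {n : ℕ} (u : Fin n → X) : (ofTuple u).degree = n := by
  simp [ofTuple]

theorem ofTuple_nonneg {n : ℕ} (u : Fin n → X) (x : X) : 0 ≤ ofTuple u x := by
  classical
  rw [ofTuple_apply]
  exact Int.natCast_nonneg _

theorem ofTuple_append {m n : ℕ} (u : Fin m → X) (v : Fin n → X) :
    ofTuple (Fin.append u v) = ofTuple u + ofTuple v := by
  simp [ofTuple, Fin.sum_univ_add]

theorem mapDomain_ofTuple (σ : X → X) {n : ℕ} (u : Fin n → X) :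
    mapDomain σ (ofTuple u) = ofTuple (σ ∘ u) := by
  simp [ofTuple, mapDomain_finsetSum]

theorem ofTuple_eq_ofTuple_iff {n : ℕ} {u v : Fin n → X} :
    ofTuple u = ofTuple v ↔ ∃ π : Equiv.Perm (Fin n), u ∘ π = v := by
  classical
  constructor
  · intro h
    refine List.exists_perm_comp_eq_of_perm_ofFn (List.perm_iff_count.2 fun x => ?_)
    exact_mod_cast (ofTuple_apply u x).symm.trans ((congrArg (· x) h).trans (ofTuple_apply v x))
  · rintro ⟨π, rfl⟩
    exact (Equiv.sum_comp π fun i => single (u i) (1 : ℤ)).symm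

theorem exists_ofTuple_eq {n : ℕ} {e : X →₀ ℤ} (he : ∀ x, 0 ≤ e x) (hn : e.degree = n) :
    ∃ u : Fin n → X, ofTuple u = e := by
  classical
  let l := (toMultiset (e.mapRange Int.toNat Int.toNat_zero)).toList
  have hl : ofTuple l.get = e := ext fun x => by
    rw [ofTuple_apply, List.ofFn_get, ← Multiset.coe_count, Multiset.coe_toList,
      count_toMultiset, mapRange_apply, Int.toNat_of_nonneg (he x)]
  have hlen : l.length = n := by exact_mod_cast (degree_ofTuple l.get).symm.trans (hl ▸ hn)
  subst hlen
  exact ⟨_, hl⟩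

theorem exists_ofTuple_sub_eq_add_mapDomain {σ : X → X} (hσ : Function.Involutive σ) {n : ℕ}
    {u v : Fin n → X} {a : X →₀ ℤ} (ha : a + mapDomain σ a = ofTuple u - ofTuple v) :
    ∃ w : Fin n → X,
      (ofTuple u - ofTuple w) + mapDomain σ (ofTuple u - ofTuple w) = ofTuple u - ofTuple v := by
  have hc : ∀ x, (ofTuple u - ofTuple v) (σ x) = (ofTuple u - ofTuple v) x := fun x => by
    rw [← ha, add_mapDomain_apply_of_involutive hσ, add_mapDomain_apply_of_involutive hσ, hσ x,
      add_comm]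
  have heven : ∀ x, σ x = x → Even ((ofTuple u - ofTuple v) x) := fun x hx => by
    rw [← ha, add_mapDomain_apply_of_involutive hσ, hx]
    exact ⟨_, rfl⟩
  obtain ⟨d, hd, hdc⟩ := exists_add_mapDomain_eq_of_even hσ hc heven
  have hdeg : d.degree = 0 := by
    have := congrArg degree hd
    simp only [map_add, degree_mapDomain, map_sub, degree_ofTuple, sub_self] at this
    omega
  have hdu : ∀ x, 0 ≤ (ofTuple u - d) x := fun x => by
    have hdx := hdc x
    rw [Set.mem_uIcc, Finsupp.sub_apply] at hdx
    rw [Finsupp.sub_apply]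
    have := ofTuple_nonneg u x
    have := ofTuple_nonneg v x
    omega
  obtain ⟨w, hw⟩ := exists_ofTuple_eq hdu (by rw [map_sub, degree_ofTuple, hdeg, sub_zero])
  exact ⟨w, by rw [hw, sub_sub_cancel, hd]⟩

theorem ofTuple_sub_add_mapDomain (σ : X → X) {n : ℕ} (u w : Fin n → X) :
    (ofTuple u - ofTuple w) + mapDomain σ (ofTuple u - ofTuple w) =
      ofTuple (Fin.append u (σ ∘ u)) - ofTuple (Fin.append w (σ ∘ w)) := by
  rw [mapDomain_sub, mapDomain_ofTuple, mapDomain_ofTuple, ofTuple_append, ofTuple_append]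
  abel

theorem ofTuple_sub_mem_range_add_mapDomain_iff {σ : X → X} (hσ : Function.Involutive σ)
    {n : ℕ} (u v : Fin n → X) :
    ofTuple u - ofTuple v ∈ Set.range (fun a => a + mapDomain σ a) ↔
      ∃ w : Fin n → X, ofTuple (Fin.append u (σ ∘ u)) - ofTuple (Fin.append w (σ ∘ w)) =
        ofTuple u - ofTuple v := by
  simp only [← ofTuple_sub_add_mapDomain]
  exact ⟨fun ⟨_, ha⟩ => exists_ofTuple_sub_eq_add_mapDomain hσ ha,
    fun ⟨w, hw⟩ => ⟨_, hw⟩⟩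

theorem isClosed_setOf_ofTuple_eq {Y : Type*} [TopologicalSpace Y] [TopologicalSpace X]
    [T2Space X] {n : ℕ} {f g : Y → Fin n → X} (hf : Continuous f) (hg : Continuous g) :
    IsClosed {y | ofTuple (f y) = ofTuple (g y)} := by
  simp only [ofTuple_eq_ofTuple_iff, Set.ofPred_exists, funext_iff, Function.comp_apply,
    Set.ofPred_forall]
  exact isClosed_iUnion_of_finite fun π => isClosed_iInter fun i =>
    isClosed_eq ((continuous_apply _).comp hf) ((continuous_apply _).comp hg)

theorem isClosed_setOf_ofTuple_sub_eq {Y : Type*} [TopologicalSpace Y] [TopologicalSpace X]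
    [T2Space X] {m n : ℕ} {f₁ f₂ : Y → Fin m → X} {g₁ g₂ : Y → Fin n → X}
    (hf₁ : Continuous f₁) (hf₂ : Continuous f₂) (hg₁ : Continuous g₁)
    (hg₂ : Continuous g₂) :
    IsClosed {y | ofTuple (f₁ y) - ofTuple (f₂ y) = ofTuple (g₁ y) - ofTuple (g₂ y)} := by
  have hset : {y | ofTuple (f₁ y) - ofTuple (f₂ y) = ofTuple (g₁ y) - ofTuple (g₂ y)} =
      {y | ofTuple (Fin.append (f₁ y) (g₂ y)) = ofTuple (Fin.append (f₂ y) (g₁ y))} := by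
    ext y
    rw [Set.mem_ofPred_eq, Set.mem_ofPred_eq, sub_eq_sub_iff_add_eq_add, ofTuple_append,
      ofTuple_append, add_comm (ofTuple (g₁ y))]
  rw [hset]
  exact isClosed_setOf_ofTuple_eq ((Fin.continuous_append m n).comp (hf₁.prodMk hg₂))
    ((Fin.continuous_append m n).comp (hf₂.prodMk hg₁))

theorem isClosed_cycleTopology_iff [TopologicalSpace X] {s : Set (X →₀ ℤ)} :
    IsClosed[cycleTopology X] s ↔
      ∀ n, IsClosed {p : (Fin n → X) × (Fin n → X) | ofTuple p.1 - ofTuple p.2 ∈ s} := by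
  rw [cycleTopology, isClosed_iSup_iff]
  exact forall_congr' fun n => isClosed_coinduced

end ZeroCycle

open ZeroCycle Finsupp in
/-- Let `X` be a compact Hausdorff space with a continuous involution `σ` (conjugation).
Then the subgroup `Z₀(X)_ℝ` of zero-cycles fixed by the induced involution and the
subgroup `Z₀(X)^av = {c + σ c}` of averaged cycles are closed subgroups of the topological
group `Z₀(X)` of zero-cycles. -/
theorem real_and_averaged_zeroCycles_isClosed
    {X : Type*} [TopologicalSpace X] [CompactSpace X] [T2Space X]
    (σ : X → X) (hσc : Continuous σ) (hσ : σ ∘ σ = id) :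
    @IsClosed _ (cycleTopology X) {c : X →₀ ℤ | Finsupp.mapDomain σ c = c} ∧
      @IsClosed _ (cycleTopology X)
        (Set.range fun a : X →₀ ℤ => a + Finsupp.mapDomain σ a) := by
  have hinv : Function.Involutive σ := congrFun hσ
  refine ⟨isClosed_cycleTopology_iff.2 fun n => ?_, isClosed_cycleTopology_iff.2 fun n => ?_⟩
  · simp only [Set.mem_ofPred_eq, mapDomain_sub, mapDomain_ofTuple]
    exact isClosed_setOf_ofTuple_sub_eq (by fun_prop) (by fun_prop) (by fun_prop) (by fun_prop)
  · have hpre : {p : (Fin n → X) × (Fin n → X) |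
          ofTuple p.1 - ofTuple p.2 ∈ Set.range fun a => a + mapDomain σ a} =
        Prod.fst '' {q : ((Fin n → X) × (Fin n → X)) × (Fin n → X) |
          ofTuple (Fin.append q.1.1 (σ ∘ q.1.1)) - ofTuple (Fin.append q.2 (σ ∘ q.2)) =
            ofTuple q.1.1 - ofTuple q.1.2} := by
      ext p
      simp only [ofTuple_sub_mem_range_add_mapDomain_iff hinv, Set.mem_ofPred_eq, Set.mem_image,
        Prod.exists, exists_and_right, exists_eq_right]
    rw [hpre]
    exact isClosedMap_fst_of_compactSpace _
      (isClosed_setOf_ofTuple_sub_eq (by fun_prop) (by fun_prop) (by fun_prop) (by fun_prop))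
end

section
/- The real projective space ℝP^d is homeomorphic to SP^d(ℂP¹)_ℝ, the subspace of the d-fold symmetric product of the Riemann sphere consisting of unordered d-tuples invariant under complex conjugation. -/
/-- The topology on a projectivization, as a quotient of the nonzero vectors. -/
noncomputable instance projectivizationTopology (K V : Type*) [DivisionRing K] [AddCommGroup V]
    [Module K V] [TopologicalSpace V] : TopologicalSpace (Projectivization K V) :=
  instTopologicalSpaceQuotient

/-- The setoid on `d`-tuples identifying tuples up to permutation; its quotient is the
`d`-fold symmetric product. -/
def spSetoid (d : ℕ) (Y : Type*) : Setoid (Fin d → Y) where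
  r f g := ∃ e : Equiv.Perm (Fin d), f ∘ e = g
  iseqv := by
    refine ⟨fun f => ⟨Equiv.refl _, rfl⟩, ?_, ?_⟩
    · rintro f g ⟨e, rfl⟩
      exact ⟨e.symm, by ext i; simp⟩
    · rintro f g h ⟨e, rfl⟩ ⟨e', rfl⟩
      exact ⟨e'.trans e, by ext i; simp⟩

/-- The `d`-fold symmetric product of a topological space, with the quotient topology. -/
def SP (d : ℕ) (Y : Type*) [TopologicalSpace Y] : Type _ :=
  Quotient (spSetoid d Y)

instance (d : ℕ) (Y : Type*) [TopologicalSpace Y] : TopologicalSpace (SP d Y) :=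
  instTopologicalSpaceQuotient

/-- Complex conjugation on the Riemann sphere `ℂP¹ = OnePoint ℂ`. -/
def sphereConj : OnePoint ℂ → OnePoint ℂ :=
  Option.map (starRingEnd ℂ)

/-- The involution induced by complex conjugation on the symmetric product
`SP^d(ℂP¹)`. -/
def spConj (d : ℕ) : SP d (OnePoint ℂ) → SP d (OnePoint ℂ) :=
  Quotient.map (fun f => sphereConj ∘ f)
    (by rintro f g ⟨e, rfl⟩; exact ⟨e, rfl⟩)

/-!
Sending an unordered `d`-tuple of points of `ℂ ∪ {∞}` to the coefficient vector of the product of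
its linear factors (`X - z` for a finite point `z`, `1` for `∞`) is a continuous bijection
`SP^d(ℂP¹) → ℂP^d` from a compact space to a Hausdorff one, hence a homeomorphism. It is injective
because a multiset is recovered from the roots of its polynomial together with the missing degree,
surjective because `ℂ` is algebraically closed, and continuous because on `d`-tuples of unit
vectors of `ℂ²` the coefficients are polynomial. It intertwines conjugation of the points with
conjugation of the coefficients, and the conjugation-fixed points of `ℂP^d` are exactly the image
of `ℝP^d`.
-/

open Set Filter Topology
open scoped LinearAlgebra.Projectivization

namespace Projectivization

section Topology

variable {K V : Type*} [DivisionRing K] [AddCommGroup V] [Module K V] [TopologicalSpace V]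

theorem _root_.Continuous.projectivization_mk {Z : Type*} [TopologicalSpace Z] {f : Z → V}
    (hf : Continuous f) (hf0 : ∀ z, f z ≠ 0) : Continuous fun z => mk K (f z) (hf0 z) :=
  continuous_quot_mk.comp (hf.subtype_mk hf0)

theorem continuous_map {L W : Type*} [DivisionRing L] [AddCommGroup W] [Module L W]
    [TopologicalSpace W] {σ : K →+* L} (f : V →ₛₗ[σ] W) (hf : Function.Injective f)
    (hfc : Continuous f) : Continuous (map f hf) :=
  (hfc.comp continuous_subtype_val).subtype_mk _ |>.quotient_map' _

theorem isOpenQuotientMap_mk [ContinuousConstSMul K V] :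
    IsOpenQuotientMap (Quotient.mk (projectivizationSetoid K V)) := by
  refine ⟨Quotient.mk_surjective, continuous_quot_mk, fun U hU => isOpen_coinduced.2 ?_⟩
  change IsOpen (Quotient.mk (projectivizationSetoid K V) ⁻¹' _)
  have hsat : Quotient.mk (projectivizationSetoid K V) ⁻¹'
      (Quotient.mk (projectivizationSetoid K V) '' U) =
      ⋃ a : Kˣ, (fun v : {v : V // v ≠ 0} =>
        (⟨a • v.1, (smul_ne_zero_iff_ne a).2 v.2⟩ : {v : V // v ≠ 0})) ⁻¹' U := by
    ext v
    simp only [mem_preimage, mem_image, mem_iUnion]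
    constructor
    · rintro ⟨u, hu, huv⟩
      obtain ⟨a, ha⟩ := Quotient.exact huv
      exact ⟨a, by convert hu using 1; exact Subtype.ext ha⟩
    · rintro ⟨a, ha⟩
      exact ⟨_, ha, Quotient.sound ⟨a, rfl⟩⟩
  rw [hsat]
  exact isOpen_iUnion fun a => hU.preimage ((continuous_subtype_val.const_smul a).subtype_mk _)

end Topology

theorem mk_eq_mk_iff_mul_eq_mul {K ι : Type*} [Field K] {v w : ι → K} (hv : v ≠ 0)
    (hw : w ≠ 0) : mk K v hv = mk K w hw ↔ ∀ i j, v i * w j = v j * w i := by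
  rw [mk_eq_mk_iff']
  constructor
  · rintro ⟨a, rfl⟩ i j
    simp only [Pi.smul_apply, smul_eq_mul]
    ring
  · intro h
    obtain ⟨k, hk⟩ := Function.ne_iff.1 hw
    refine ⟨v k / w k, funext fun j => ?_⟩
    simp only [Pi.smul_apply, smul_eq_mul, Pi.zero_apply] at hk ⊢
    rw [div_mul_eq_mul_div, h k j, mul_div_assoc, div_self hk, mul_one]

instance {K : Type*} [Field K] [TopologicalSpace K] [ContinuousMul K] [T2Space K] (ι : Type*) :
    T2Space (ℙ K (ι → K)) := by
  refine (t2Space_iff_of_isOpenQuotientMap (isOpenQuotientMap_mk (K := K))).2 ?_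
  have hrel : {q : {v : ι → K // v ≠ 0} × {v : ι → K // v ≠ 0} |
      Quotient.mk (projectivizationSetoid K (ι → K)) q.1 = Quotient.mk _ q.2} =
      ⋂ i, ⋂ j, {q | q.1.1 i * q.2.1 j = q.1.1 j * q.2.1 i} := by
    ext ⟨⟨v, hv⟩, ⟨w, hw⟩⟩
    simp only [mem_ofPred_eq, mem_iInter]
    exact mk_eq_mk_iff_mul_eq_mul hv hw
  have hcoord (i : ι) : Continuous fun v : {v : ι → K // v ≠ 0} => v.1 i :=
    (continuous_apply i).comp continuous_subtype_val
  rw [hrel]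
  exact isClosed_iInter fun i => isClosed_iInter fun j => isClosed_eq
    (((hcoord i).comp continuous_fst).mul ((hcoord j).comp continuous_snd))
    (((hcoord j).comp continuous_fst).mul ((hcoord i).comp continuous_snd))

instance {E : Type*} [NormedAddCommGroup E] [NormedSpace ℝ E] [ProperSpace E] :
    CompactSpace (ℙ ℝ E) := by
  have : CompactSpace (Metric.sphere (0 : E) 1) :=
    isCompact_iff_compactSpace.1 (isCompact_sphere 0 1)
  refine Function.Surjective.compactSpace (f := fun v : Metric.sphere (0 : E) 1 =>
    mk ℝ v.1 (ne_zero_of_mem_unit_sphere v)) (continuous_subtype_val.projectivization_mk _) ?_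
  refine ind fun v hv => ⟨⟨‖v‖⁻¹ • v, ?_⟩, (mk_eq_mk_iff' ℝ _ _ _ _).2 ⟨‖v‖⁻¹, rfl⟩⟩
  simp [norm_smul, hv]

end Projectivization

section RealPoints

open Projectivization ComplexConjugate

variable {ι : Type*}

def Complex.ofRealPi : (ι → ℝ) →ₛₗ[Complex.ofRealHom] (ι → ℂ) where
  toFun v i := v i
  map_add' _ _ := by ext; simp
  map_smul' _ _ := by ext; simp

@[simp] theorem Complex.ofRealPi_apply (v : ι → ℝ) (i : ι) : Complex.ofRealPi v i = v i := rfl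

theorem Complex.ofRealPi_injective : Function.Injective (Complex.ofRealPi (ι := ι)) :=
  fun _ _ h => funext fun i => Complex.ofReal_injective (congrFun h i)

noncomputable def projOfReal : ℙ ℝ (ι → ℝ) → ℙ ℂ (ι → ℂ) :=
  map Complex.ofRealPi Complex.ofRealPi_injective

noncomputable def projConj : ℙ ℂ (ι → ℂ) → ℙ ℂ (ι → ℂ) :=
  map (starLinearEquiv ℂ).toLinearMap (starLinearEquiv ℂ).injective

theorem projConj_mk (v : ι → ℂ) (hv : v ≠ 0) :
    projConj (mk ℂ v hv) = mk ℂ (star v) (star_ne_zero.2 hv) := rfl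

theorem continuous_projOfReal : Continuous (projOfReal (ι := ι)) :=
  continuous_map _ _ (continuous_pi fun i => Complex.continuous_ofReal.comp (continuous_apply i))

theorem projOfReal_injective : Function.Injective (projOfReal (ι := ι)) := by
  intro x y h
  induction x using ind with | h v hv =>
  induction y using ind with | h w hw =>
  simp only [projOfReal, map_mk, mk_eq_mk_iff'] at h ⊢
  obtain ⟨a, ha⟩ := h
  obtain ⟨k, hk⟩ := Function.ne_iff.1 hw
  have hak : a * w k = v k := by simpa using congrFun ha k
  have ha_real : a = ((v k / w k : ℝ) : ℂ) := by
    rw [Complex.ofReal_div, ← hak, mul_div_assoc, div_self (by exact_mod_cast hk), mul_one]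
  refine ⟨v k / w k, funext fun i => Complex.ofReal_injective ?_⟩
  simpa [ha_real] using congrFun ha i

theorem range_projOfReal : range (projOfReal (ι := ι)) = {p | projConj p = p} := by
  ext p
  constructor
  · rintro ⟨x, rfl⟩
    induction x using ind with | h v hv =>
    exact (mk_eq_mk_iff' ℂ _ _ _ _).2 ⟨1, by ext i; simp⟩
  · induction p using ind with | h w hw =>
    intro h
    rw [mem_ofPred_eq, projConj_mk, mk_eq_mk_iff_mul_eq_mul] at h
    obtain ⟨k, hk⟩ := Function.ne_iff.1 hw
    -- `conj (w k) • w` is a nonzero multiple of `w` with real coordinates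
    have hre (i : ι) : (((conj (w k) * w i).re : ℝ) : ℂ) = conj (w k) * w i :=
      Complex.conj_eq_iff_re.1 (by simpa [mul_comm] using h i k)
    have hwk : conj (w k) ≠ 0 := by simpa using hk
    refine ⟨mk ℝ (fun i => (conj (w k) * w i).re) fun h0 => hw (funext fun i => ?_), ?_⟩
    · simpa [congrFun h0 i, hwk] using (hre i).symm
    · exact (mk_eq_mk_iff' ℂ _ _ _ _).2 ⟨conj (w k), funext fun i => (hre i).symm⟩

end RealPoints

theorem exists_perm_comp_eq_of_map_univ_eq {ι α : Type*} [Fintype ι] {f g : ι → α}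
    (h : Finset.univ.val.map f = Finset.univ.val.map g) : ∃ e : Equiv.Perm ι, f ∘ e = g := by
  classical
  have hfib (c : α) : Fintype.card {i // g i = c} = Fintype.card {i // f i = c} := by
    have := congrArg (Multiset.count c) h.symm
    simp only [Multiset.count_map] at this
    simpa [Fintype.card_subtype, Finset.card_def, eq_comm] using this
  exact ⟨Equiv.ofFiberEquiv fun c => Fintype.equivOfCardEq (hfib c),
    funext (Equiv.ofFiberEquiv_map _)⟩

namespace SP

variable {d : ℕ} {Y : Type*} [TopologicalSpace Y]

def mk (f : Fin d → Y) : SP d Y := Quotient.mk (spSetoid d Y) f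

theorem isQuotientMap_mk : IsQuotientMap (mk : (Fin d → Y) → SP d Y) :=
  isQuotientMap_quotient_mk'

theorem ind {P : SP d Y → Prop} (h : ∀ f, P (mk f)) (x : SP d Y) : P x := Quotient.ind h x

instance [CompactSpace Y] : CompactSpace (SP d Y) :=
  inferInstanceAs (CompactSpace (Quotient (spSetoid d Y)))

def toMultiset : SP d Y → Multiset Y :=
  Quotient.lift (fun f => Finset.univ.val.map f) (by
    rintro f g ⟨e, rfl⟩
    rw [← Multiset.map_map, Multiset.map_univ_val_equiv])

theorem toMultiset_mk (f : Fin d → Y) : toMultiset (mk f) = Finset.univ.val.map f := rfl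

theorem card_toMultiset (x : SP d Y) : Multiset.card (toMultiset x) = d := by
  induction x using SP.ind
  simp [toMultiset_mk]

theorem toMultiset_injective : Function.Injective (toMultiset : SP d Y → Multiset Y) := by
  rintro ⟨f⟩ ⟨g⟩ h
  exact Quotient.sound (exists_perm_comp_eq_of_map_univ_eq h)

theorem exists_toMultiset_eq {M : Multiset Y} (hM : Multiset.card M = d) :
    ∃ x : SP d Y, toMultiset x = M := by
  obtain ⟨l, rfl⟩ : ∃ l : List Y, (l : Multiset Y) = M := Quotient.exists_rep M
  rw [Multiset.coe_card] at hM
  subst hM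
  exact ⟨mk fun i => l[i], by simp [toMultiset_mk, Fin.univ_val_map]⟩

theorem toMultiset_spConj (x : SP d (OnePoint ℂ)) :
    toMultiset (spConj d x) = (toMultiset x).map sphereConj := by
  induction x using SP.ind with | _ f =>
  exact (Multiset.map_map sphereConj f Finset.univ.val).symm

end SP

section PolyOfRoots

open Polynomial OnePoint

variable {K : Type*} [CommRing K]

noncomputable def linearFactor (y : OnePoint K) : K[X] := y.elim 1 fun z => X - C z

@[simp] theorem linearFactor_infty : linearFactor (∞ : OnePoint K) = 1 := rfl

@[simp] theorem linearFactor_coe (z : K) : linearFactor (z : OnePoint K) = X - C z := rfl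

theorem monic_linearFactor (y : OnePoint K) : (linearFactor y).Monic := by
  cases y using OnePoint.rec <;> simp [monic_X_sub_C]

noncomputable def polyOfRoots (M : Multiset (OnePoint K)) : K[X] := (M.map linearFactor).prod

@[simp] theorem polyOfRoots_zero : polyOfRoots (0 : Multiset (OnePoint K)) = 1 := by
  simp [polyOfRoots]

@[simp] theorem polyOfRoots_cons (y : OnePoint K) (M : Multiset (OnePoint K)) :
    polyOfRoots (y ::ₘ M) = linearFactor y * polyOfRoots M := by
  simp [polyOfRoots]

theorem monic_polyOfRoots (M : Multiset (OnePoint K)) : (polyOfRoots M).Monic :=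
  monic_multiset_prod_of_monic _ _ fun y _ => monic_linearFactor y

theorem natDegree_polyOfRoots_le (M : Multiset (OnePoint K)) :
    (polyOfRoots M).natDegree ≤ Multiset.card M := by
  induction M using Multiset.induction with
  | empty => simp
  | cons y M ih =>
    rw [polyOfRoots_cons, (monic_linearFactor y).natDegree_mul (monic_polyOfRoots M),
      Multiset.card_cons, add_comm]
    have := natDegree_X_le (R := K)
    cases y using OnePoint.rec <;> simp <;> omega

theorem map_polyOfRoots {L : Type*} [CommRing L] (σ : K →+* L) (M : Multiset (OnePoint K)) :
    (polyOfRoots M).map σ = polyOfRoots (M.map (OnePoint.map σ)) := by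
  induction M using Multiset.induction with
  | empty => simp
  | cons y M ih => cases y using OnePoint.rec <;> simp [ih]

theorem eq_map_roots_add_replicate [IsDomain K] (M : Multiset (OnePoint K)) :
    M = (polyOfRoots M).roots.map (↑) +
      Multiset.replicate (Multiset.card M - (polyOfRoots M).natDegree) ∞ := by
  induction M using Multiset.induction with
  | empty => simp
  | cons y M ih =>
    have hdeg := natDegree_polyOfRoots_le M
    cases y using OnePoint.rec with
    | infty =>
      rw [polyOfRoots_cons, linearFactor_infty, one_mul, Multiset.card_cons,
        Nat.sub_add_comm hdeg, Multiset.replicate_succ, Multiset.add_cons, ← ih]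
    | coe z =>
      have hmonic := monic_polyOfRoots M
      rw [polyOfRoots_cons, linearFactor_coe,
        roots_mul ((monic_X_sub_C z).mul hmonic).ne_zero, roots_X_sub_C,
        (monic_X_sub_C z).natDegree_mul hmonic, natDegree_X_sub_C, Multiset.card_cons,
        add_comm 1, Nat.add_sub_add_right, Multiset.singleton_add, Multiset.map_cons,
        Multiset.cons_add, ← ih]

theorem eq_of_polyOfRoots_eq [IsDomain K] {M N : Multiset (OnePoint K)}
    (hcard : Multiset.card M = Multiset.card N) (h : polyOfRoots M = polyOfRoots N) : M = N := by
  rw [eq_map_roots_add_replicate M, eq_map_roots_add_replicate N, h, hcard]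

theorem exists_polyOfRoots_eq {K : Type*} [Field K] [IsAlgClosed K] {Q : K[X]} {d : ℕ}
    (hd : Q.natDegree ≤ d) :
    ∃ M : Multiset (OnePoint K), Multiset.card M = d ∧ C Q.leadingCoeff * polyOfRoots M = Q := by
  have hroots : Multiset.card Q.roots = Q.natDegree := IsAlgClosed.card_roots_eq_natDegree
  refine ⟨Q.roots.map (↑) + Multiset.replicate (d - Multiset.card Q.roots) ∞, by simp; omega, ?_⟩
  have hfinite : polyOfRoots (Q.roots.map ((↑) : K → OnePoint K)) =
      (Q.roots.map (X - C ·)).prod := by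
    simp [polyOfRoots, Multiset.map_map, Function.comp_def]
  rw [polyOfRoots, Multiset.map_add, Multiset.prod_add, ← polyOfRoots, hfinite]
  simpa using C_leadingCoeff_mul_prod_multiset_X_sub_C hroots

end PolyOfRoots

section CoefficientVector

open Polynomial Projectivization

variable {n : ℕ}

theorem Polynomial.toFn_apply {R : Type*} [Semiring R] (P : R[X]) (i : Fin n) :
    toFn n P i = P.coeff i := rfl

theorem Polynomial.toFn_ne_zero_of_monic {R : Type*} [Semiring R] [Nontrivial R] {P : R[X]}
    (hP : P.Monic) (hn : P.natDegree < n) : toFn n P ≠ 0 := by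
  classical
  intro h
  apply hP.ne_zero
  rw [← ofFn_comp_toFn_eq_id_of_natDegree_lt hn, h, map_zero]

theorem Polynomial.eq_of_mk_toFn_eq {K : Type*} [Field K] {P Q : K[X]} (hP : P.Monic)
    (hQ : Q.Monic) (hPn : P.natDegree < n) (hQn : Q.natDegree < n)
    (h : mk K (toFn n P) (toFn_ne_zero_of_monic hP hPn) =
      mk K (toFn n Q) (toFn_ne_zero_of_monic hQ hQn)) : P = Q := by
  classical
  obtain ⟨a, ha⟩ := (mk_eq_mk_iff' K _ _ _ _).1 h
  have hPQ : P = C a * Q := by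
    rw [← ofFn_comp_toFn_eq_id_of_natDegree_lt hPn, ← ha, map_smul,
      ofFn_comp_toFn_eq_id_of_natDegree_lt hQn, smul_eq_C_mul]
  have ha1 : a = 1 := by
    simpa [hP.leadingCoeff, hQ.leadingCoeff] using (congrArg leadingCoeff hPQ).symm
  rw [hPQ, ha1, C_1, one_mul]

theorem Polynomial.continuous_coeff_prod {Z R ι : Type*} [TopologicalSpace Z] [CommSemiring R]
    [TopologicalSpace R] [IsTopologicalSemiring R] (s : Finset ι) {p : ι → Z → R[X]}
    (hp : ∀ i k, Continuous fun z => (p i z).coeff k) (k : ℕ) :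
    Continuous fun z => (∏ i ∈ s, p i z).coeff k := by
  induction s using Finset.cons_induction generalizing k with
  | empty => simpa using continuous_const
  | cons i s hi ih =>
    simp only [Finset.prod_cons, coeff_mul]
    exact continuous_finsetSum _ fun j _ => (hp i j.1).mul (ih j.2)

theorem Polynomial.continuous_toFn_prod_sub {Z R ι : Type*} [TopologicalSpace Z] [CommRing R]
    [TopologicalSpace R] [IsTopologicalRing R] [Fintype ι] {a b : ι → Z → R}
    (ha : ∀ i, Continuous (a i)) (hb : ∀ i, Continuous (b i)) :
    Continuous fun z => toFn n (∏ i, (C (a i z) * X - C (b i z))) := by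
  refine continuous_pi fun k => ?_
  simp only [toFn_apply]
  refine continuous_coeff_prod _ (fun i k => ?_) k
  rcases k with _ | _ | k <;> simp
  exacts [(hb i).neg, ha i, continuous_const]

end CoefficientVector

section LineSlope

open Polynomial OnePoint

variable {K : Type*} [Field K]

open Classical in
noncomputable def lineSlope (w : Fin 2 → K) : OnePoint K :=
  if w 0 = 0 then ∞ else ↑(w 1 / w 0)

theorem lineSlope_smul {c : K} (hc : c ≠ 0) (w : Fin 2 → K) :
    lineSlope (c • w) = lineSlope w := by
  by_cases h : w 0 = 0 <;> simp [lineSlope, h, hc, mul_div_mul_left]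

theorem exists_C_mul_linearFactor_lineSlope {w : Fin 2 → K} (hw : w ≠ 0) :
    ∃ c ≠ 0, C (w 0) * X - C (w 1) = C c * linearFactor (lineSlope w) := by
  by_cases h0 : w 0 = 0
  · have h1 : w 1 ≠ 0 := fun h1 => hw (funext fun i => by fin_cases i <;> assumption)
    exact ⟨-w 1, neg_ne_zero.2 h1, by simp [lineSlope, h0]⟩
  · refine ⟨w 0, h0, ?_⟩
    simp [lineSlope, h0, mul_sub, ← C_mul, mul_div_cancel₀]

theorem exists_prod_eq_C_mul_polyOfRoots {ι : Type*} [Fintype ι] {ws : ι → Fin 2 → K}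
    (hws : ∀ i, ws i ≠ 0) : ∃ c ≠ 0, ∏ i, (C (ws i 0) * X - C (ws i 1)) =
      C c * polyOfRoots (Finset.univ.val.map fun i => lineSlope (ws i)) := by
  choose c hc0 hc using fun i => exists_C_mul_linearFactor_lineSlope (hws i)
  refine ⟨∏ i, c i, Finset.prod_ne_zero_iff.2 fun i _ => hc0 i, ?_⟩
  rw [map_prod, polyOfRoots, Multiset.map_map, ← Finset.prod_eq_multiset_prod,
    ← Finset.prod_mul_distrib]
  exact Finset.prod_congr rfl fun i _ => hc i

theorem continuousAt_lineSlope {K : Type*} [NontriviallyNormedField K] [ProperSpace K]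
    {w : Fin 2 → K} (hw : w ≠ 0) : ContinuousAt lineSlope w := by
  by_cases h0 : w 0 = 0
  · have h1 : w 1 ≠ 0 := fun h1 => hw (funext fun i => by fin_cases i <;> assumption)
    -- near `w`, `lineSlope` is the inversion `t ↦ t⁻¹` of `K ∪ {∞}` applied to `w 0 / w 1`
    have hinv : Tendsto (fun t : K => lineSlope ![t, 1]) (𝓝 0) (𝓝 ∞) := by
      rw [← nhdsNE_sup_pure, tendsto_sup]
      have hzero : lineSlope ![(0 : K), 1] = ∞ := by simp [lineSlope]
      have hinv₀ : Tendsto (fun t : K => t⁻¹) (𝓝[≠] 0) (coclosedCompact K) := by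
        rw [coclosedCompact_eq_cocompact, ← Metric.cobounded_eq_cocompact]
        exact tendsto_inv₀_nhdsNE_zero
      refine ⟨(tendsto_coe_infty.comp hinv₀).congr' ?_, hzero ▸ tendsto_pure_nhds _ _⟩
      filter_upwards [self_mem_nhdsWithin] with t (ht : t ≠ 0)
      simp [lineSlope, ht]
    have hq : ContinuousAt (fun w' : Fin 2 → K => w' 0 / w' 1) w :=
      (continuous_apply 0).continuousAt.div (continuous_apply 1).continuousAt h1
    rw [ContinuousAt, lineSlope, if_pos h0]
    refine (hinv.comp (by simpa [h0] using hq.tendsto)).congr' ?_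
    filter_upwards [(continuous_apply 1).continuousAt.eventually_ne h1] with w' hw'
    rw [Function.comp_apply, ← lineSlope_smul (inv_ne_zero hw') w']
    congr 1
    ext i
    fin_cases i <;> simp [hw', div_eq_inv_mul]
  · refine (continuous_coe.continuousAt.comp
      ((continuous_apply 1).continuousAt.div (continuous_apply 0).continuousAt h0)).congr ?_
    filter_upwards [(continuous_apply 0).continuousAt.eventually_ne h0] with w' hw'
    simp [lineSlope, hw']

theorem exists_mem_sphere_lineSlope_eq {𝕜 : Type*} [RCLike 𝕜] (y : OnePoint 𝕜) :
    ∃ w ∈ Metric.sphere (0 : Fin 2 → 𝕜) 1, lineSlope w = y := by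
  obtain ⟨w, hw, rfl⟩ : ∃ w : Fin 2 → 𝕜, w ≠ 0 ∧ lineSlope w = y := by
    cases y using OnePoint.rec with
    | infty => exact ⟨![0, 1], by simp, by simp [lineSlope]⟩
    | coe z => exact ⟨![1, z], by simp, by simp [lineSlope]⟩
  have hn : (‖w‖⁻¹ : 𝕜) ≠ 0 := by simpa using hw
  exact ⟨(‖w‖⁻¹ : 𝕜) • w, by simp [norm_smul, hw], lineSlope_smul hn w⟩

end LineSlope

namespace SP

open Polynomial Projectivization

variable {d : ℕ}

section Field

variable {K : Type*} [Field K] [TopologicalSpace K]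

theorem natDegree_polyOfRoots_toMultiset_lt (x : SP d (OnePoint K)) :
    (polyOfRoots x.toMultiset).natDegree < d + 1 :=
  Nat.lt_succ_of_le ((natDegree_polyOfRoots_le _).trans (card_toMultiset x).le)

noncomputable def toProj (x : SP d (OnePoint K)) : ℙ K (Fin (d + 1) → K) :=
  Projectivization.mk K (toFn (d + 1) (polyOfRoots x.toMultiset))
    (toFn_ne_zero_of_monic (monic_polyOfRoots _) (natDegree_polyOfRoots_toMultiset_lt x))

theorem toProj_injective : Function.Injective (toProj : SP d (OnePoint K) → _) := by
  intro x y h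
  refine toMultiset_injective (eq_of_polyOfRoots_eq ?_ (eq_of_mk_toFn_eq (monic_polyOfRoots _)
    (monic_polyOfRoots _) (natDegree_polyOfRoots_toMultiset_lt x)
    (natDegree_polyOfRoots_toMultiset_lt y) h))
  rw [card_toMultiset, card_toMultiset]

theorem toProj_surjective [IsAlgClosed K] :
    Function.Surjective (toProj : SP d (OnePoint K) → _) := by
  classical
  refine Projectivization.ind fun v hv => ?_
  have hQ : (ofFn (d + 1) v).natDegree ≤ d :=
    Nat.le_of_lt_succ (ofFn_natDegree_lt (Nat.succ_pos d) v)
  obtain ⟨M, hM, hQM⟩ := exists_polyOfRoots_eq hQ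
  obtain ⟨x, rfl⟩ := exists_toMultiset_eq hM
  refine ⟨x, ((mk_eq_mk_iff' K _ _ _ _).2 ⟨(ofFn (d + 1) v).leadingCoeff, ?_⟩).symm⟩
  rw [← map_smul, smul_eq_C_mul, hQM, toFn_comp_ofFn_eq_id]

end Field

theorem toProj_spConj (x : SP d (OnePoint ℂ)) : toProj (spConj d x) = projConj (toProj x) := by
  simp only [toProj, projConj_mk]
  congr 1
  rw [toMultiset_spConj]
  change toFn _ (polyOfRoots ((toMultiset x).map (OnePoint.map (starRingEnd ℂ)))) = _
  rw [← map_polyOfRoots]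
  ext k
  simp [toFn_apply]

theorem continuous_toProj {𝕜 : Type*} [RCLike 𝕜] :
    Continuous (toProj : SP d (OnePoint 𝕜) → ℙ 𝕜 (Fin (d + 1) → 𝕜)) := by
  let S := Metric.sphere (0 : Fin 2 → 𝕜) 1
  have : CompactSpace S := isCompact_iff_compactSpace.1 (isCompact_sphere 0 1)
  let slopes : (Fin d → S) → Fin d → OnePoint 𝕜 := fun ws i => lineSlope (ws i : Fin 2 → 𝕜)
  have hslopes : Continuous slopes := continuous_pi fun i =>
    (continuous_iff_continuousAt.2 fun w => (continuousAt_lineSlope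
      (ne_zero_of_mem_unit_sphere w)).comp continuous_subtype_val.continuousAt).comp
      (continuous_apply i)
  have hsurj : Function.Surjective slopes := fun ys => by
    choose ws hws using fun i => exists_mem_sphere_lineSlope_eq (ys i)
    exact ⟨fun i => ⟨ws i, (hws i).1⟩, funext fun i => (hws i).2⟩
  have hq : IsQuotientMap (mk ∘ slopes) :=
    isQuotientMap_mk.comp (hslopes.isClosedMap.isQuotientMap hslopes hsurj)
  let G : (Fin d → S) → Fin (d + 1) → 𝕜 := fun ws =>
    toFn (d + 1) (∏ i, (C ((ws i : Fin 2 → 𝕜) 0) * X - C ((ws i : Fin 2 → 𝕜) 1)))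
  have hG (ws : Fin d → S) :
      ∃ c : 𝕜, c ≠ 0 ∧ G ws = c • toFn (d + 1) (polyOfRoots (toMultiset (mk (slopes ws)))) := by
    obtain ⟨c, hc0, hc⟩ := exists_prod_eq_C_mul_polyOfRoots fun i =>
      ne_zero_of_mem_unit_sphere (ws i)
    refine ⟨c, hc0, ?_⟩
    rw [← map_smul, smul_eq_C_mul, toMultiset_mk, ← hc]
  have hG0 (ws : Fin d → S) : G ws ≠ 0 := by
    obtain ⟨c, hc0, hc⟩ := hG ws
    exact hc ▸ smul_ne_zero hc0 (toFn_ne_zero_of_monic (monic_polyOfRoots _)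
      (natDegree_polyOfRoots_toMultiset_lt _))
  have hGc : Continuous G := continuous_toFn_prod_sub
    (fun i => (continuous_apply 0).comp (continuous_subtype_val.comp (continuous_apply i)))
    (fun i => (continuous_apply 1).comp (continuous_subtype_val.comp (continuous_apply i)))
  rw [hq.continuous_iff]
  refine (hGc.projectivization_mk hG0).congr fun ws => ?_
  obtain ⟨c, -, hc⟩ := hG ws
  exact (mk_eq_mk_iff' 𝕜 _ _ _ _).2 ⟨c, hc.symm⟩

noncomputable def toProjHomeomorph (d : ℕ) : SP d (OnePoint ℂ) ≃ₜ ℙ ℂ (Fin (d + 1) → ℂ) :=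
  continuous_toProj.homeoOfEquivCompactToT2
    (f := Equiv.ofBijective _ ⟨toProj_injective, toProj_surjective⟩)

theorem toProjHomeomorph_apply (x : SP d (OnePoint ℂ)) : toProjHomeomorph d x = toProj x := rfl

end SP

/-- The real projective space `ℝPᵈ` is homeomorphic to `SP^d(ℂP¹)_ℝ`, the subspace of the
`d`-fold symmetric product of the Riemann sphere consisting of unordered `d`-tuples
invariant under complex conjugation. -/
theorem realProjectiveSpace_homeomorph_fixed_symmetricProduct (d : ℕ) :
    Nonempty (Projectivization ℝ (Fin (d + 1) → ℝ) ≃ₜ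
      {x : SP d (OnePoint ℂ) // spConj d x = x}) := by
  have hfix (x : SP d (OnePoint ℂ)) :
      spConj d x = x ↔ projConj (SP.toProjHomeomorph d x) = SP.toProjHomeomorph d x := by
    rw [SP.toProjHomeomorph_apply, ← SP.toProj_spConj, SP.toProj_injective.eq_iff]
  have hreal : IsEmbedding (projOfReal (ι := Fin (d + 1))) :=
    (continuous_projOfReal.isClosedEmbedding projOfReal_injective).isEmbedding
  exact ⟨hreal.toHomeomorph.trans
    ((Homeomorph.setCongr range_projOfReal).trans ((SP.toProjHomeomorph d).subtype hfix).symm)⟩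
end

section
/- Consider the following commutative square of topological spaces: G'_n → G_{n+1} is a closed inclusion, p_{n+1} : G_{n+1} → K_{n+1} is a quotient map, G'_n = p_{n+1}^{-1}(K̃_n) for a subset K̃_n ⊆ K_{n+1}, and p_{n+1} is injective on G_{n+1} ∖ G'_n. Then the square with vertices G'_n, G_{n+1}, K̃_n (with the quotient topology from p_{n+1}|_{G'_n}), K_{n+1} is a pushout in the category of topological spaces. -/
open TopologicalSpace

/-- Let `p : G → K` be a topological quotient map, `K̃ ⊆ K` a subset with full preimage
`G' = p⁻¹(K̃)`, give `K̃` the quotient topology of `p` restricted to `G'`, and suppose `p`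
is injective on `G ∖ G'`.  Then the square `G' → G`, `G' → K̃`, `K̃ → K`, `G → K` is a
pushout of topological spaces: for every space `A`, every continuous `f : G → A` and every
`g : K̃ → A` continuous for the quotient topology which agree on `G'`, there is a unique
continuous `φ : K → A` with `φ ∘ p = f` and `φ|_{K̃} = g`. -/
theorem pushout_of_quotient_restriction
    {G K : Type*} [TopologicalSpace G] [TopologicalSpace K]
    (p : G → K) (hp : Topology.IsQuotientMap p) (Kt : Set K)
    (hinj : ∀ a b : G, p a ∉ Kt → p b ∉ Kt → p a = p b → a = b)
    (A : Type*) [TopologicalSpace A]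
    (f : G → A) (hf : Continuous f)
    (g : Kt → A)
    (hg : @Continuous _ _
      (coinduced (fun x : (p ⁻¹' Kt) => (⟨p x.1, x.2⟩ : Kt)) inferInstance) _ g)
    (hcomm : ∀ x : (p ⁻¹' Kt), f x.1 = g ⟨p x.1, x.2⟩) :
    ∃! φ : K → A, Continuous φ ∧ (∀ x : G, φ (p x) = f x) ∧ ∀ y : Kt, φ y.1 = g y := by
  classical
  set φ : K → A := fun y =>
    if h : y ∈ Kt then g ⟨y, h⟩ else f (hp.surjective y).choose with hφdef
  have hcomp : ∀ x : G, φ (p x) = f x := by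
    intro x
    by_cases h : p x ∈ Kt
    · simp only [hφdef, dif_pos h]
      exact (hcomm ⟨x, h⟩).symm
    · simp only [hφdef, dif_neg h]
      have hspec := (hp.surjective (p x)).choose_spec
      have hx : (hp.surjective (p x)).choose = x := by
        apply hinj
        · rw [hspec]; exact h
        · exact h
        · rw [hspec]
      rw [hx]
  refine ⟨φ, ⟨?_, hcomp, ?_⟩, ?_⟩
  · rw [hp.continuous_iff]
    have : φ ∘ p = f := funext hcomp
    rw [this]; exact hf
  · intro y
    simp only [hφdef, dif_pos y.2]
  · rintro ψ ⟨-, hψ, -⟩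
    funext y
    obtain ⟨x, rfl⟩ := hp.surjective y
    rw [hψ x, hcomp x]
end

section
/- Let M⁰ ⊆ M¹ ⊆ ⋯ ⊆ Mˢ be closed subgroups of an abelian topological group, each inclusion a closed embedding, and set Qᵗ = Mᵗ/Mᵗ⁻¹ (with M⁻¹ = 0). Suppose for each t there is a continuous homomorphism p : Mˢ → Mᵗ whose restriction to Mᵗ is of the form Id + ψ with image of ψ contained in Mᵗ⁻¹. Then the resulting map ξ : Mˢ → Q⁰ × Q¹ × ⋯ × Qˢ (whose t-th coordinate is the composite Mˢ → Mᵗ → Qᵗ) is a weak homotopy equivalence. -/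
/-- The map induced by a continuous map on homotopy groups. -/
def piMap {X Y : Type*} [TopologicalSpace X] [TopologicalSpace Y] (n : ℕ) (f : C(X, Y)) (x : X) :
    HomotopyGroup (Fin n) X x → HomotopyGroup (Fin n) Y (f x) :=
  Quotient.map
    (fun g => ⟨f.comp g.1, fun y hy => by
      simp only [ContinuousMap.comp_apply, g.2 y hy]⟩)
    (fun a b h => h.map (fun H => H.compContinuousMap f))

/-- A weak homotopy equivalence: a continuous map inducing bijections on all homotopy
groups at all basepoints. -/
def IsWeakHomotopyEquiv {X Y : Type*} [TopologicalSpace X] [TopologicalSpace Y]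
    (f : C(X, Y)) : Prop :=
  ∀ (n : ℕ) (x : X), Function.Bijective (piMap n f x)

/-- The "previous" subgroup of the filtration `M`: `prev M 0 = ⊥` and
`prev M (t+1) = M t`. -/
def prevSubgroup {G : Type*} [AddCommGroup G] (M : ℕ → AddSubgroup G) : ℕ → AddSubgroup G
  | 0 => ⊥
  | t + 1 => M t

/-!
The map `ξ` is in fact an isomorphism of topological groups. It is injective: if every
`p t x` lies in `Mᵗ⁻¹`, then descending from `x ∈ Mˢ` the identity `x = p t x - ψ x` puts `x` in
`Mᵗ⁻¹` at each level, and finally in `M⁻¹ = 0`. Lifting a tuple `(yᵗ)` to `∏ Mᵗ` and correcting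
level by level from the top gives a continuous homomorphism `L : ∏ Mᵗ → Mˢ` with `ξ ∘ L` equal to
the product of the quotient maps, which is an open quotient map; hence `ξ` is a quotient map, and
so a homeomorphism.
-/

theorem IsHomeomorph.isWeakHomotopyEquiv {X Y : Type*} [TopologicalSpace X]
    [TopologicalSpace Y] {f : C(X, Y)} (hf : IsHomeomorph f) : IsWeakHomotopyEquiv f := by
  obtain ⟨-, g, hgf, hfg, hg⟩ := isHomeomorph_iff_exists_inverse.1 hf
  intro n x
  constructor
  · refine Quotient.ind fun a => Quotient.ind fun b h => ?_
    obtain ⟨H⟩ := Quotient.exact h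
    exact Quotient.sound ⟨(H.compContinuousMap ⟨g, hg⟩).cast (by ext; exact hgf _)
      (by ext; exact hgf _)⟩
  · refine Quotient.ind fun b => ⟨Quotient.mk _ ⟨(⟨g, hg⟩ : C(Y, X)).comp b.1,
      fun y hy => by simp [b.2 y hy, hgf x]⟩, ?_⟩
    exact congrArg (Quotient.mk _) (Subtype.ext (ContinuousMap.ext fun y => hfg (b y)))

section Filtration

variable {G : Type*} [AddCommGroup G] {M : ℕ → AddSubgroup G}

lemma prevSubgroup_le (hmono : Monotone M) (n : ℕ) : prevSubgroup M n ≤ M n := by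
  cases n with
  | zero => exact bot_le
  | succ m => exact hmono m.le_succ

lemma le_prevSubgroup (hmono : Monotone M) {j n : ℕ} (h : j < n) : M j ≤ prevSubgroup M n := by
  cases n with
  | zero => omega
  | succ m => exact hmono (Nat.le_of_lt_succ h)

/-- The graded piece `Qᵗ = Mᵗ / Mᵗ⁻¹` of the filtration. -/
abbrev gradedPiece (M : ℕ → AddSubgroup G) (t : ℕ) : Type _ :=
  M t ⧸ (prevSubgroup M t).addSubgroupOf (M t)

lemma gradedPiece_mk_eq_mk_iff {t : ℕ} {a b : M t} :
    (a : gradedPiece M t) = b ↔ (a : G) - b ∈ prevSubgroup M t := by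
  rw [QuotientAddGroup.eq_iff_sub_mem, AddSubgroup.mem_addSubgroupOf, AddSubgroup.coe_sub]

variable {s : ℕ}

/-- On `Mᵗ`, `p t = Id + ψ` with `ψ` valued in `Mᵗ⁻¹`. -/
def IsIdModPrev (M : ℕ → AddSubgroup G) (p : ∀ t : Fin (s + 1), M s →+ M t) : Prop :=
  ∀ (t : Fin (s + 1)) (x : M s), (x : G) ∈ M t → (p t x : G) - x ∈ prevSubgroup M t

variable {p : ∀ t : Fin (s + 1), M s →+ M t}

namespace IsIdModPrev

lemma mem_prevSubgroup_of_proj_mem (hp : IsIdModPrev M p) {t : Fin (s + 1)} {x : M s}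
    (hx : (x : G) ∈ M t) (hpx : (p t x : G) ∈ prevSubgroup M t) :
    (x : G) ∈ prevSubgroup M t := by
  simpa using sub_mem hpx (hp t x hx)

lemma proj_mem_prevSubgroup (hp : IsIdModPrev M p) (hmono : Monotone M) {t : Fin (s + 1)}
    {x : M s} (hx : (x : G) ∈ prevSubgroup M t) : (p t x : G) ∈ prevSubgroup M t := by
  simpa using add_mem (hp t x (prevSubgroup_le hmono t hx)) hx

lemma eq_zero_of_forall_proj_mem (hp : IsIdModPrev M p) {x : M s}
    (h : ∀ t : Fin (s + 1), (p t x : G) ∈ prevSubgroup M t) : x = 0 := by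
  have hprev : ∀ t : Fin (s + 1), (x : G) ∈ prevSubgroup M t :=
    Fin.reverseInduction (hp.mem_prevSubgroup_of_proj_mem x.2 (h _))
      fun t ht => hp.mem_prevSubgroup_of_proj_mem ht (h _)
  exact Subtype.ext (by simpa [prevSubgroup] using hprev 0)

end IsIdModPrev

variable (p) (hmono : Monotone M)

/-- Solves `p t x ≡ y t (mod Mᵗ⁻¹)` for `t = s, s - 1, …, s - k + 1`, correcting level by level
from the top: a correction in `Mᵗ` does not disturb the levels above `t`. -/
def partialInverse : ℕ → (∀ t : Fin (s + 1), M t) →+ M s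
  | 0 => 0
  | k + 1 =>
    let τ : Fin (s + 1) := ⟨s - k, by omega⟩
    partialInverse k + (AddSubgroup.inclusion (hmono (Nat.sub_le s k))).comp
      (Pi.evalAddMonoidHom (fun t : Fin (s + 1) => M t) τ - (p τ).comp (partialInverse k))

variable {hmono p}

lemma proj_partialInverse_sub_mem (hp : IsIdModPrev M p) (y : ∀ t : Fin (s + 1), M t)
    {k : ℕ} (hk : k ≤ s + 1) {t : Fin (s + 1)} (ht : s < t + k) :
    (p t (partialInverse p hmono k y) : G) - y t ∈ prevSubgroup M t := by
  induction k generalizing t with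
  | zero => omega
  | succ k ih =>
    set τ : Fin (s + 1) := ⟨s - k, by omega⟩ with hτ
    set x := partialInverse p hmono k y
    set c : M s := AddSubgroup.inclusion (hmono (Nat.sub_le s k)) (y τ - p τ x)
    have hc : (c : G) ∈ M τ := (y τ - p τ x).2
    have hcτ : (c : G) = y τ - p τ x := rfl
    change (p t (x + c) : G) - y t ∈ _
    rw [map_add, AddSubgroup.coe_add]
    clear_value τ x c
    have hτs : (τ : ℕ) = s - k := by rw [hτ]
    obtain hlt | rfl : s < t + k ∨ t = τ := by rw [Fin.ext_iff]; omega
    · have hτt : M τ ≤ prevSubgroup M t := le_prevSubgroup hmono (by omega)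
      have hpc := hp.proj_mem_prevSubgroup hmono (hτt hc)
      simpa [add_sub_right_comm] using add_mem (ih (by omega) hlt) hpc
    · have : (p t x : G) + p t c - y t = p t c - c := by rw [hcτ]; abel
      exact this ▸ hp t c hc

lemma continuous_partialInverse [TopologicalSpace G] [IsTopologicalAddGroup G]
    (hpc : ∀ t, Continuous (p t)) (k : ℕ) : Continuous (partialInverse p hmono k) := by
  induction k with
  | zero => exact continuous_const
  | succ k ih =>
    refine ih.add (Continuous.subtype_mk ?_ _)
    exact (continuous_subtype_val.comp (continuous_apply _)).sub
      (continuous_subtype_val.comp ((hpc _).comp ih))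

variable (p)

/-- The map `ξ` of the statement. -/
def splittingMap : M s →+ ∀ t : Fin (s + 1), gradedPiece M t :=
  AddMonoidHom.pi fun t => (QuotientAddGroup.mk' _).comp (p t)

variable {p}

lemma IsIdModPrev.splittingMap_injective (hp : IsIdModPrev M p) :
    Function.Injective (splittingMap p) :=
  (injective_iff_map_eq_zero _).2 fun x hx => hp.eq_zero_of_forall_proj_mem fun t => by
    simpa [splittingMap, QuotientAddGroup.eq_zero_iff, AddSubgroup.mem_addSubgroupOf] using
      congrFun hx t

lemma IsIdModPrev.splittingMap_comp_partialInverse (hp : IsIdModPrev M p) :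
    splittingMap p ∘ partialInverse p hmono (s + 1) =
      Pi.map fun t : Fin (s + 1) => (QuotientAddGroup.mk : M t → gradedPiece M t) := by
  funext y t
  exact gradedPiece_mk_eq_mk_iff.2 (proj_partialInverse_sub_mem hp y le_rfl (by omega))

lemma IsIdModPrev.isHomeomorph_splittingMap [TopologicalSpace G] [IsTopologicalAddGroup G]
    (hmono : Monotone M) (hp : IsIdModPrev M p) (hpc : ∀ t, Continuous (p t)) :
    IsHomeomorph (splittingMap p) := by
  have hcont : Continuous (splittingMap p) :=
    continuous_pi fun t => continuous_quot_mk.comp (hpc t)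
  refine isHomeomorph_iff_isQuotientMap_injective.2 ⟨?_, hp.splittingMap_injective⟩
  refine .of_comp (continuous_partialInverse (hmono := hmono) hpc (s + 1)) hcont ?_
  rw [hp.splittingMap_comp_partialInverse]
  exact (IsOpenQuotientMap.piMap fun t => QuotientAddGroup.isOpenQuotientMap_mk).isQuotientMap

end Filtration

/-- (Splitting principle.)  Let `M 0 ⊆ M 1 ⊆ ⋯ ⊆ M s` be closed subgroups of a
topological abelian group `G`, and set `Q t = M t / M (t-1)` (with `M (-1) = 0`).
Suppose for each `t ≤ s` there is a continuous homomorphism `p t : M s → M t` whose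
restriction to `M t` is of the form `Id + ψ` with the image of `ψ` contained in
`M (t-1)`.  Then the map `ξ : M s → Q 0 × Q 1 × ⋯ × Q s`, whose `t`-th coordinate is the
composite `M s → M t → Q t`, is a weak homotopy equivalence. -/
theorem splitting_of_filtration_with_projections
    {G : Type*} [AddCommGroup G] [TopologicalSpace G] [IsTopologicalAddGroup G]
    (s : ℕ) (M : ℕ → AddSubgroup G) (hmono : Monotone M)
    (p : ∀ t : Fin (s + 1), (M s) →+ (M t))
    (hp : ∀ t, Continuous (p t))
    (hrestr : ∀ (t : Fin (s + 1)) (x : M s), (x : G) ∈ M t →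
      ((p t x : G) - x) ∈ prevSubgroup M t) :
    IsWeakHomotopyEquiv
      (X := M s)
      (Y := ∀ t : Fin (s + 1), (M t) ⧸ (prevSubgroup M t).addSubgroupOf (M t))
      ⟨fun x t => QuotientAddGroup.mk (p t x),
        by exact continuous_pi fun t => continuous_quot_mk.comp (hp t)⟩ := by
  exact (IsIdModPrev.isHomeomorph_splittingMap hmono hrestr hp).isWeakHomotopyEquiv
end
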